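/- arXiv:2002.09338 — 3 statements merged into one kernel-verified Lean document; each statement's English description precedes it below -/
import Mathlib

section
/- Let d ≥ 1, x ∈ ℝ^d, y ∈ ℝ, β ∈ ℝ^d be fixed, and let δ be a random vector in {0,1}^d with independent coordinates δ_j ~ Bernoulli(p_j), p_j ∈ (0,1]. Set P = diag(p_1,…,p_d), x̃ = x ⊙ δ, and define the debiased gradient g̃(β) = P⁻¹ x̃ (x̃ᵀ P⁻¹ β − y) − (I − P) P⁻² diag(x̃ x̃ᵀ) β. Then E_δ[g̃(β)] = x xᵀ β − x y, the gradient at β of the quadratic loss β ↦ ½(xᵀβ − y)². -/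
/-- The probability that an independent Bernoulli mask `δ` (with `δ_j ~ Bernoulli(p_j)`)
equals a given pattern `η ∈ {0,1}^d`. -/
def maskWeight {d : ℕ} (p : Fin d → ℝ) (η : Fin d → Bool) : ℝ :=
  ∏ j, if η j then p j else 1 - p j

/-- The zero-imputed vector `x̃ = x ⊙ δ` for mask pattern `η`. -/
def maskedVec {d : ℕ} (x : Fin d → ℝ) (η : Fin d → Bool) : Fin d → ℝ :=
  fun j => x j * (if η j then 1 else 0)

/-- The debiased gradient
`g̃(β) = P⁻¹ x̃ (x̃ᵀ P⁻¹ β − y) − (I − P) P⁻² diag(x̃ x̃ᵀ) β` for mask pattern `η`,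
where `x̃ = x ⊙ η`, `P = diag(p)` and `P⁻¹ = diag(p_j⁻¹)`. -/
noncomputable def debiasedGrad {d : ℕ} (p x : Fin d → ℝ) (y : ℝ) (β : Fin d → ℝ)
    (η : Fin d → Bool) : Fin d → ℝ :=
  ((∑ j, maskedVec x η j * ((p j)⁻¹ * β j)) - y) •
      (Matrix.diagonal fun j => (p j)⁻¹).mulVec (maskedVec x η) -
    ((1 - Matrix.diagonal p) * (Matrix.diagonal fun j => (p j)⁻¹) *
        (Matrix.diagonal fun j => (p j)⁻¹) *
        (Matrix.diagonal fun j => (maskedVec x η j) ^ 2)).mulVec β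

open Finset

/-! Coordinatewise, `g̃(β)ᵢ` is affine in the mask products `δⱼδᵢ` and in `δᵢ`, so its mean only
needs `E[δᵢ] = pᵢ` and `E[δⱼδᵢ] = pⱼpᵢ + [j = i] pᵢ(1 - pᵢ)`. Rescaling by `P⁻¹` turns the
`pⱼpᵢ` part into `x xᵀ β - x y`, while the diagonal excess `xᵢ² βᵢ (1 - pᵢ) / pᵢ`, which comes from
`δᵢ² = δᵢ`, is exactly the mean of the correction `(I - P) P⁻² diag(x̃ x̃ᵀ) β`. -/

-- The independence of the coordinates of `δ` enters only here.
theorem sum_maskWeight_mul_prod {d : ℕ} (p : Fin d → ℝ) (m : Fin d → Bool → ℝ) :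
    ∑ η : Fin d → Bool, maskWeight p η * ∏ j, m j (η j) =
      ∏ j, (p j * m j true + (1 - p j) * m j false) := by
  calc ∑ η : Fin d → Bool, maskWeight p η * ∏ j, m j (η j)
      = ∑ η : Fin d → Bool, ∏ j, (if η j then p j else 1 - p j) * m j (η j) := by
        simp only [maskWeight, prod_mul_distrib]
    _ = ∏ j, ∑ b : Bool, (if b then p j else 1 - p j) * m j b := by rw [Fintype.prod_sum]
    _ = ∏ j, (p j * m j true + (1 - p j) * m j false) := by simp

theorem sum_maskWeight_mul_prod_ind {d : ℕ} (p : Fin d → ℝ) (S : Finset (Fin d)) :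
    ∑ η : Fin d → Bool, maskWeight p η * ∏ j ∈ S, (if η j then (1 : ℝ) else 0) = ∏ j ∈ S, p j := by
  have h := sum_maskWeight_mul_prod p fun j b => if j ∈ S then (if b then (1 : ℝ) else 0) else 1
  simp only [prod_ite_mem, univ_inter] at h
  rw [h]
  calc _ = ∏ j, if j ∈ S then p j else 1 :=
        prod_congr rfl fun j _ => by by_cases hj : j ∈ S <;> simp [hj]
    _ = ∏ j ∈ S, p j := by rw [prod_ite_mem, univ_inter]

theorem sum_maskWeight_mul_ind {d : ℕ} (p : Fin d → ℝ) (i : Fin d) :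
    ∑ η : Fin d → Bool, maskWeight p η * (if η i then (1 : ℝ) else 0) = p i := by
  simpa using sum_maskWeight_mul_prod_ind p {i}

theorem sum_maskWeight_mul_ind_mul_ind {d : ℕ} (p : Fin d → ℝ) (i j : Fin d) :
    ∑ η : Fin d → Bool, maskWeight p η *
        ((if η j then (1 : ℝ) else 0) * (if η i then (1 : ℝ) else 0)) =
      p j * p i + if j = i then p i * (1 - p i) else 0 := by
  by_cases hji : j = i
  · subst hji
    simp only [ite_zero_mul_ite_zero, and_self, mul_one, if_true, sum_maskWeight_mul_ind]
    ring
  · rw [if_neg hji, add_zero, ← prod_pair hji, ← sum_maskWeight_mul_prod_ind p {j, i}]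
    simp only [prod_pair hji]

theorem debiasedGrad_apply {d : ℕ} (p x : Fin d → ℝ) (y : ℝ) (β : Fin d → ℝ)
    (η : Fin d → Bool) (i : Fin d) :
    debiasedGrad p x y β η i =
      ∑ j, x j * β j * x i / (p j * p i) *
          ((if η j then (1 : ℝ) else 0) * (if η i then (1 : ℝ) else 0)) -
        (y * x i / p i + (1 - p i) * x i ^ 2 * β i / p i ^ 2) * (if η i then (1 : ℝ) else 0) := by
  have hsq : (if η i then (1 : ℝ) else 0) ^ 2 = if η i then 1 else 0 := by split_ifs <;> simp
  simp only [debiasedGrad, maskedVec, Pi.sub_apply, Pi.smul_apply, smul_eq_mul,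
    Matrix.mulVec_diagonal, ← Matrix.diagonal_one, Matrix.diagonal_mul_diagonal,
    Matrix.sub_mulVec, one_mul, sub_mul, sum_mul, mul_pow, hsq, sub_sub]
  congr 1
  · exact sum_congr rfl fun j _ => by ring
  · ring

theorem sum_maskWeight_smul_debiasedGrad_apply {d : ℕ} (p x : Fin d → ℝ) (y : ℝ)
    (β : Fin d → ℝ) (i : Fin d) :
    (∑ η : Fin d → Bool, maskWeight p η • debiasedGrad p x y β η) i =
      ∑ j, x j * β j * x i / (p j * p i) * ∑ η : Fin d → Bool, maskWeight p η *
          ((if η j then (1 : ℝ) else 0) * (if η i then (1 : ℝ) else 0)) -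
        (y * x i / p i + (1 - p i) * x i ^ 2 * β i / p i ^ 2) *
          ∑ η : Fin d → Bool, maskWeight p η * (if η i then (1 : ℝ) else 0) := by
  simp only [Finset.sum_apply, Pi.smul_apply, smul_eq_mul, debiasedGrad_apply, mul_sub,
    sum_sub_distrib, mul_sum]
  rw [sum_comm]
  congr 1 <;> refine sum_congr rfl fun _ _ => ?_
  · exact sum_congr rfl fun _ _ => by ring
  · ring

theorem stmt_1_general (d : ℕ) (x p : Fin d → ℝ) (y : ℝ) (β : Fin d → ℝ)
    (hp : ∀ j, 0 < p j ∧ p j ≤ 1) :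
    (∑ η : Fin d → Bool, maskWeight p η • debiasedGrad p x y β η) =
      (Matrix.of fun i j => x i * x j).mulVec β - y • x := by
  funext i
  have hp0 : ∀ j, p j ≠ 0 := fun j => (hp j).1.ne'
  have hscale : ∀ j, x j * β j * x i / (p j * p i) * (p j * p i) = x i * x j * β j := fun j => by
    field_simp [hp0 j, hp0 i]
  rw [sum_maskWeight_smul_debiasedGrad_apply, sum_maskWeight_mul_ind]
  simp only [sum_maskWeight_mul_ind_mul_ind]
  simp only [mul_add, sum_add_distrib, hscale, mul_ite, mul_zero, sum_ite_eq', mem_univ, if_true,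
    Pi.sub_apply, Pi.smul_apply, smul_eq_mul, Matrix.mulVec, dotProduct, Matrix.of_apply]
  field_simp [hp0]
  ring

/-- for fixed `x ∈ ℝ^d`, `y ∈ ℝ`, `β ∈ ℝ^d` and a random mask with
independent coordinates `δ_j ~ Bernoulli(p_j)`, `p_j ∈ (0,1]`, the debiased gradient
satisfies `E_δ[g̃(β)] = x xᵀ β − x y`, the gradient at `β` of `β ↦ ½(xᵀβ − y)²`. -/
theorem stmt_1 (d : ℕ) (hd : 1 ≤ d) (x p : Fin d → ℝ) (y : ℝ) (β : Fin d → ℝ)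
    (hp : ∀ j, 0 < p j ∧ p j ≤ 1) :
    (∑ η : Fin d → Bool, maskWeight p η • debiasedGrad p x y β η) =
      (Matrix.of fun i j => x i * x j).mulVec β - y • x :=
  stmt_1_general d x p y β hp
end

section
/- Let d ≥ 1, x, β ∈ ℝ^d, y ∈ ℝ be fixed, and let δ be a random vector in {0,1}^d with independent coordinates δ_j ~ Bernoulli(p_j), p_j ∈ (0,1]. Set P = diag(p_1,…,p_d), p_m = min_j p_j, and x̃ = x ⊙ δ. Then E_δ[(x̃ᵀ P⁻¹ β − y)²] = (xᵀβ − y)² + Σ_{j=1}^d (p_j⁻¹ − 1) x_j² β_j², and consequently E_δ[(x̃ᵀ P⁻¹ β − y)²] ≤ (xᵀβ − y)² + ((1 − p_m)/p_m) Σ_{j=1}^d x_j² β_j². -/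
namespace maskWeight

variable {d : ℕ} (p : Fin d → ℝ)

theorem sum_mul_prod (g : Fin d → Bool → ℝ) :
    ∑ η, maskWeight p η * ∏ j, g j (η j) = ∏ j, (p j * g j true + (1 - p j) * g j false) := by
  have h : ∀ j, p j * g j true + (1 - p j) * g j false =
      ∑ b : Bool, (if b then p j else 1 - p j) * g j b := fun j => by simp
  simp_rw [h, Fintype.prod_sum, maskWeight, Finset.prod_mul_distrib]

theorem sum_eq_one : ∑ η, maskWeight p η = 1 := by
  simpa using sum_mul_prod p fun _ _ => 1

theorem sum_mul_prod_indicator (s : Finset (Fin d)) :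
    ∑ η, maskWeight p η * ∏ j ∈ s, (if η j then (1 : ℝ) else 0) = ∏ j ∈ s, p j := by
  classical
  have h := sum_mul_prod p fun j b => if j ∈ s then (if b then (1 : ℝ) else 0) else 1
  simp only [Finset.prod_ite_mem_eq] at h
  rw [h, ← Finset.prod_ite_mem_eq s p]
  refine Finset.prod_congr rfl fun j _ => ?_
  by_cases hj : j ∈ s <;> simp [hj]

theorem sum_mul_indicator (j : Fin d) :
    ∑ η, maskWeight p η * (if η j then (1 : ℝ) else 0) = p j := by
  simpa using sum_mul_prod_indicator p {j}

theorem sum_mul_indicator_mul_indicator (j k : Fin d) :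
    ∑ η, maskWeight p η * ((if η j then (1 : ℝ) else 0) * (if η k then 1 else 0)) =
      if j = k then p j else p j * p k := by
  classical
  split_ifs with hjk
  · subst hjk; simpa [← ite_and] using sum_mul_indicator p j
  · simpa [Finset.prod_pair hjk] using sum_mul_prod_indicator p {j, k}

theorem sum_mul_sum_maskedVec (c : Fin d → ℝ) :
    ∑ η, maskWeight p η * ∑ j, maskedVec c η j = ∑ j, p j * c j := by
  simp_rw [Finset.mul_sum, maskedVec, mul_left_comm _ (c _)]
  rw [Finset.sum_comm]
  simp_rw [← Finset.mul_sum, sum_mul_indicator, mul_comm]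

theorem sum_mul_sum_maskedVec_sq (c : Fin d → ℝ) :
    ∑ η, maskWeight p η * (∑ j, maskedVec c η j) ^ 2 =
      (∑ j, p j * c j) ^ 2 + ∑ j, p j * (1 - p j) * c j ^ 2 := by
  have hsq : ∀ η, maskWeight p η * (∑ j, maskedVec c η j) ^ 2 = ∑ j, ∑ k,
      c j * c k * (maskWeight p η * ((if η j then (1 : ℝ) else 0) * (if η k then 1 else 0))) := by
    intro η
    simp_rw [sq, Finset.sum_mul_sum, Finset.mul_sum, maskedVec]
    exact Fintype.sum_congr _ _ fun j => Fintype.sum_congr _ _ fun k => by ring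
  have hcov : ∀ j k, c j * c k * (if j = k then p j else p j * p k) =
      p j * c j * (p k * c k) + if j = k then p j * (1 - p j) * c j ^ 2 else 0 := by
    intro j k
    split_ifs with hjk
    · subst hjk; ring
    · ring
  simp_rw [hsq]
  rw [Finset.sum_comm]
  simp_rw [Finset.sum_comm (s := Finset.univ (α := Fin d → Bool)), ← Finset.mul_sum,
    sum_mul_indicator_mul_indicator, hcov, Finset.sum_add_distrib, Finset.sum_ite_eq,
    Finset.mem_univ, if_true, ← Finset.sum_mul_sum, sq]

theorem sum_mul_sum_maskedVec_sub_sq (c : Fin d → ℝ) (y : ℝ) :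
    ∑ η, maskWeight p η * (∑ j, maskedVec c η j - y) ^ 2 =
      (∑ j, p j * c j - y) ^ 2 + ∑ j, p j * (1 - p j) * c j ^ 2 := by
  have hexpand : ∀ η, maskWeight p η * (∑ j, maskedVec c η j - y) ^ 2 =
      maskWeight p η * (∑ j, maskedVec c η j) ^ 2 -
        2 * y * (maskWeight p η * ∑ j, maskedVec c η j) + y ^ 2 * maskWeight p η :=
    fun η => by ring
  simp_rw [hexpand, Finset.sum_add_distrib, Finset.sum_sub_distrib, ← Finset.mul_sum,
    sum_mul_sum_maskedVec_sq, sum_mul_sum_maskedVec, sum_eq_one]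
  ring

end maskWeight

theorem maskedVec_mul {d : ℕ} (x c : Fin d → ℝ) (η : Fin d → Bool) (j : Fin d) :
    maskedVec x η j * c j = maskedVec (x * c) η j := by
  simp only [maskedVec, Pi.mul_apply]
  ring

theorem inv_sub_one_le_one_sub_div {a b : ℝ} (ha : 0 < a) (hab : a ≤ b) :
    b⁻¹ - 1 ≤ (1 - a) / a := by
  rw [sub_div, div_self ha.ne', one_div]
  exact sub_le_sub_right (inv_anti₀ ha hab) 1

/-- With `x̃ = x ⊙ δ`, `δ_j ~ Bernoulli(p_j)` independent, `p_j ∈ (0,1]`,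
`P = diag(p)` and `p_m = min_j p_j`:
`E_δ[(x̃ᵀ P⁻¹ β − y)²] = (xᵀβ − y)² + Σ_j (p_j⁻¹ − 1) x_j² β_j²`, and consequently
`E_δ[(x̃ᵀ P⁻¹ β − y)²] ≤ (xᵀβ − y)² + ((1 − p_m)/p_m) Σ_j x_j² β_j²`. -/
theorem stmt_3 (d : ℕ) (hd : 1 ≤ d) (x β : Fin d → ℝ) (y : ℝ) (p : Fin d → ℝ)
    (hp : ∀ j, 0 < p j ∧ p j ≤ 1)
    (pm : ℝ) (hpm : pm = Finset.univ.inf' ⟨⟨0, hd⟩, Finset.mem_univ _⟩ p) :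
    (∑ η : Fin d → Bool,
        maskWeight p η * ((∑ j, maskedVec x η j * ((p j)⁻¹ * β j)) - y) ^ 2) =
      ((∑ j, x j * β j) - y) ^ 2 + ∑ j, ((p j)⁻¹ - 1) * (x j) ^ 2 * (β j) ^ 2
    ∧
    (∑ η : Fin d → Bool,
        maskWeight p η * ((∑ j, maskedVec x η j * ((p j)⁻¹ * β j)) - y) ^ 2) ≤
      ((∑ j, x j * β j) - y) ^ 2 + ((1 - pm) / pm) * ∑ j, (x j) ^ 2 * (β j) ^ 2 := by
  have hmean : ∀ j, p j * (x j * ((p j)⁻¹ * β j)) = x j * β j := fun j => by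
    field_simp [(hp j).1.ne']
  have hvar : ∀ j, p j * (1 - p j) * (x j * ((p j)⁻¹ * β j)) ^ 2 =
      ((p j)⁻¹ - 1) * x j ^ 2 * β j ^ 2 := fun j => by
    field_simp [(hp j).1.ne']
  have hexp : ∑ η : Fin d → Bool,
      maskWeight p η * ((∑ j, maskedVec x η j * ((p j)⁻¹ * β j)) - y) ^ 2 =
        ((∑ j, x j * β j) - y) ^ 2 + ∑ j, ((p j)⁻¹ - 1) * (x j) ^ 2 * (β j) ^ 2 := by
    simp_rw [maskedVec_mul x (fun j => (p j)⁻¹ * β j), maskWeight.sum_mul_sum_maskedVec_sub_sq,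
      Pi.mul_apply, hmean, hvar]
  have hpm_pos : 0 < pm := hpm ▸ (Finset.lt_inf'_iff _).2 fun j _ => (hp j).1
  have hpm_le : ∀ j, pm ≤ p j := fun j => hpm ▸ Finset.inf'_le _ (Finset.mem_univ j)
  refine ⟨hexp, hexp ▸ add_le_add_right ?_ _⟩
  rw [Finset.mul_sum]
  refine Finset.sum_le_sum fun j _ => ?_
  rw [mul_assoc]
  exact mul_le_mul_of_nonneg_right (inv_sub_one_le_one_sub_div hpm_pos (hpm_le j)) (by positivity)
end

section
/- Let (X, ε, δ) be random with values in ℝ^d × ℝ × {0,1}^d such that: ε is independent of X with E[ε] = 0 and E[ε²] < ∞; δ has independent coordinates δ_j ~ Bernoulli(p_j) with p_j ∈ (0,1] and is independent of (X, ε); and E[‖X‖⁴] < ∞. Let y = Xᵀβ* + ε for a fixed β* ∈ ℝ^d, P = diag(p_1,…,p_d), p_m = min_j p_j, X̃ = X ⊙ δ, and g̃(β*) = P⁻¹ X̃ (X̃ᵀ P⁻¹ β* − y) − (I − P) P⁻² diag(X̃ X̃ᵀ) β*. Then E[‖g̃(β*)‖²] ≤ (1/p_m²) E[ε² ‖X‖²]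 + (((1 − p_m) + (1 − p_m)²)/p_m³) E[‖X‖² · Σ_{j=1}^d X_j² (β*_j)²]. -/
/-!
Write `m_j = δ_j / p_j`. In coordinates the diagonal correction cancels the `j = i` term of the
residual, so `g̃(β*)_i = m_i X_i (T_i - ε)` with `T_i = ∑_{j ≠ i} (m_j - 1) X_j β*_j`.
As the mask is independent of `(X, ε)`, it can be averaged out first, with `(X, ε)` fixed.
The factors `m_j - 1` are centred and independent of `m_i`, so the term linear in `ε`
averages to zero; the mean of `m_i²` is `1/p_i ≤ 1/p_m`; and `m_i² ≤ 1/p_m²` while `T_i` has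
variance `∑_{j ≠ i} (1 - p_j)/p_j X_j² β*_j² ≤ (1 - p_m)/p_m ∑_j X_j² β*_j²`. This gives the
bound with the smaller constants `1/p_m` and `(1 - p_m)/p_m³`. Everything is integrable
because `X_i X_j` and `ε X_i` lie in `L²`, the latter by independence.
-/

open MeasureTheory ProbabilityTheory Finset

section Bernoulli

variable {ι : Type*}

/-- `maskedInv p η j` is `δ_j / p_j` evaluated at the mask `δ = η`. -/
noncomputable def maskedInv (p : ι → ℝ) (η : ι → Bool) (j : ι) : ℝ :=
  if η j then (p j)⁻¹ else 0

theorem maskedInv_sq_le {p : ι → ℝ} {pm : ℝ} (hpm : 0 < pm) (hp : ∀ j, pm ≤ p j)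
    (η : ι → Bool) (j : ι) : maskedInv p η j ^ 2 ≤ (pm ^ 2)⁻¹ := by
  unfold maskedInv
  split_ifs
  · rw [inv_pow]
    exact inv_anti₀ (by positivity) (pow_le_pow_left₀ hpm.le (hp j) 2)
  · rw [zero_pow two_ne_zero]
    positivity

variable [Fintype ι]

def bernoulliWeight (p : ι → ℝ) (η : ι → Bool) : ℝ :=
  ∏ j, if η j then p j else 1 - p j

theorem bernoulliWeight_nonneg {p : ι → ℝ} (hp : ∀ j, 0 ≤ p j ∧ p j ≤ 1) (η : ι → Bool) :
    0 ≤ bernoulliWeight p η :=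
  prod_nonneg fun j _ => by split_ifs <;> linarith [hp j]

variable [DecidableEq ι]

theorem sum_bernoulliWeight_mul_prod (p : ι → ℝ) (s : Finset ι) (φ : ι → Bool → ℝ) :
    ∑ η, bernoulliWeight p η * ∏ j ∈ s, φ j (η j)
      = ∏ j ∈ s, (p j * φ j true + (1 - p j) * φ j false) := by
  simp only [bernoulliWeight, ← Fintype.prod_ite_mem s, ← prod_mul_distrib]
  rw [← Fintype.prod_sum (fun j b => (if b then p j else 1 - p j) * if j ∈ s then φ j b else 1)]
  refine prod_congr rfl fun j _ => ?_
  split_ifs <;> simp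

theorem sum_bernoulliWeight_mul_apply (p : ι → ℝ) (φ : Bool → ℝ) (j : ι) :
    ∑ η, bernoulliWeight p η * φ (η j) = p j * φ true + (1 - p j) * φ false := by
  simpa using sum_bernoulliWeight_mul_prod p {j} fun _ => φ

theorem sum_bernoulliWeight_mul_apply_mul_apply (p : ι → ℝ) (φ ψ : Bool → ℝ) {j k : ι}
    (hjk : j ≠ k) :
    ∑ η, bernoulliWeight p η * (φ (η j) * ψ (η k))
      = (p j * φ true + (1 - p j) * φ false) * (p k * ψ true + (1 - p k) * ψ false) := by
  have h := sum_bernoulliWeight_mul_prod p {j, k} fun l => if l = j then φ else ψ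
  simpa [prod_pair hjk, hjk.symm] using h

theorem sum_bernoulliWeight_mul_maskedInv_sq (p : ι → ℝ) (i : ι) :
    ∑ η, bernoulliWeight p η * maskedInv p η i ^ 2 = (p i)⁻¹ := by
  refine (sum_bernoulliWeight_mul_apply p (fun b => (if b then (p i)⁻¹ else 0) ^ 2) i).trans ?_
  by_cases hi : p i = 0
  · simp [hi]
  · simp only [if_true, Bool.false_eq_true, if_false]
    field_simp
    ring

theorem sum_bernoulliWeight_mul_maskedInv_sub_one_mul {p : ι → ℝ} {j k : ι} (hp : p j ≠ 0)
    (hjk : j ≠ k) (φ : Bool → ℝ) :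
    ∑ η, bernoulliWeight p η * ((maskedInv p η j - 1) * φ (η k)) = 0 := by
  refine (sum_bernoulliWeight_mul_apply_mul_apply p
    (fun b => (if b then (p j)⁻¹ else 0) - 1) φ hjk).trans ?_
  simp only [if_true, Bool.false_eq_true, if_false]
  field_simp
  ring

theorem sum_bernoulliWeight_mul_maskedInv_sub_one_sq {p : ι → ℝ} {j : ι} (hp : p j ≠ 0) :
    ∑ η, bernoulliWeight p η * (maskedInv p η j - 1) ^ 2 = (1 - p j) / p j := by
  refine (sum_bernoulliWeight_mul_apply p
    (fun b => ((if b then (p j)⁻¹ else 0) - 1) ^ 2) j).trans ?_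
  simp only [if_true, Bool.false_eq_true, if_false]
  field_simp
  ring

theorem sum_bernoulliWeight_mul_sum_sq {p : ι → ℝ} (hp : ∀ j, p j ≠ 0) (a : ι → ℝ)
    (s : Finset ι) :
    ∑ η, bernoulliWeight p η * (∑ j ∈ s, (maskedInv p η j - 1) * a j) ^ 2
      = ∑ j ∈ s, (1 - p j) / p j * a j ^ 2 := by
  have hcov : ∀ j k, ∑ η, bernoulliWeight p η * ((maskedInv p η j - 1) * a j *
      ((maskedInv p η k - 1) * a k)) = if j = k then (1 - p j) / p j * a j ^ 2 else 0 := by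
    intro j k
    split_ifs with hjk
    · subst hjk
      simp_rw [← sum_bernoulliWeight_mul_maskedInv_sub_one_sq (hp j), sum_mul]
      exact sum_congr rfl fun η _ => by ring
    · have h : ∑ η, bernoulliWeight p η * ((maskedInv p η j - 1) * (maskedInv p η k - 1)) = 0 :=
        sum_bernoulliWeight_mul_maskedInv_sub_one_mul (hp j) hjk
          fun b => (if b then (p k)⁻¹ else 0) - 1
      calc _ = ∑ η, bernoulliWeight p η * ((maskedInv p η j - 1) * (maskedInv p η k - 1))
            * (a j * a k) := sum_congr rfl fun η _ => by ring
        _ = 0 := by rw [← sum_mul, h, zero_mul]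
  simp_rw [sq, sum_mul_sum, mul_sum]
  rw [sum_comm]
  refine sum_congr rfl fun j hj => ?_
  rw [sum_comm, sum_congr rfl fun k _ => hcov j k, sum_ite_eq, if_pos hj, sq]

theorem sum_bernoulliWeight_mul_maskedInv_sq_mul_sum {p : ι → ℝ} (hp : ∀ j, p j ≠ 0)
    (a : ι → ℝ) (i : ι) :
    ∑ η, bernoulliWeight p η * (maskedInv p η i ^ 2 *
      ∑ j ∈ univ.erase i, (maskedInv p η j - 1) * a j) = 0 := by
  simp_rw [mul_sum]
  rw [sum_comm]
  refine sum_eq_zero fun j hj => ?_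
  have h : ∑ η, bernoulliWeight p η * ((maskedInv p η j - 1) * maskedInv p η i ^ 2) = 0 :=
    sum_bernoulliWeight_mul_maskedInv_sub_one_mul (hp j) (ne_of_mem_erase hj)
      fun b => (if b then (p i)⁻¹ else 0) ^ 2
  calc _ = ∑ η, bernoulliWeight p η * ((maskedInv p η j - 1) * maskedInv p η i ^ 2) * a j :=
        sum_congr rfl fun η _ => by ring
    _ = 0 := by rw [← sum_mul, h, zero_mul]

theorem sum_bernoulliWeight_mul_maskedInv_sq_mul_sum_sq_le {p : ι → ℝ} {pm : ℝ} (hpm : 0 < pm)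
    (hp : ∀ j, pm ≤ p j ∧ p j ≤ 1) (a : ι → ℝ) (i : ι) :
    ∑ η, bernoulliWeight p η *
        (maskedInv p η i ^ 2 * (∑ j ∈ univ.erase i, (maskedInv p η j - 1) * a j) ^ 2)
      ≤ (1 - pm) / pm ^ 3 * ∑ j, a j ^ 2 := by
  have hvar : ∀ j, (1 - p j) / p j ≤ (1 - pm) / pm := fun j =>
    div_le_div₀ (by linarith [hp j]) (by linarith [hp j]) hpm (hp j).1
  have hvar_nonneg : 0 ≤ (1 - pm) / pm := div_nonneg (by linarith [hp i]) hpm.le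
  calc _ ≤ ∑ η, bernoulliWeight p η *
          ((pm ^ 2)⁻¹ * (∑ j ∈ univ.erase i, (maskedInv p η j - 1) * a j) ^ 2) := by
        gcongr with η
        · exact bernoulliWeight_nonneg (fun j => ⟨hpm.le.trans (hp j).1, (hp j).2⟩) η
        · exact maskedInv_sq_le hpm (fun j => (hp j).1) η i
    _ = (pm ^ 2)⁻¹ * ∑ j ∈ univ.erase i, (1 - p j) / p j * a j ^ 2 := by
        rw [← sum_bernoulliWeight_mul_sum_sq fun j => (hpm.trans_le (hp j).1).ne', mul_sum]
        exact sum_congr rfl fun η _ => by ring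
    _ ≤ (pm ^ 2)⁻¹ * ∑ j, (1 - pm) / pm * a j ^ 2 := by
        gcongr
        calc ∑ j ∈ univ.erase i, (1 - p j) / p j * a j ^ 2
            ≤ ∑ j ∈ univ.erase i, (1 - pm) / pm * a j ^ 2 :=
              sum_le_sum fun j _ => mul_le_mul_of_nonneg_right (hvar j) (sq_nonneg _)
          _ ≤ ∑ j, (1 - pm) / pm * a j ^ 2 :=
              sum_le_sum_of_subset_of_nonneg (erase_subset i univ) fun j _ _ =>
                mul_nonneg hvar_nonneg (sq_nonneg _)
    _ = (1 - pm) / pm ^ 3 * ∑ j, a j ^ 2 := by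
        rw [← mul_sum]
        field_simp

theorem sum_bernoulliWeight_mul_maskedInv_mul_sub_sq_le {p : ι → ℝ} {pm : ℝ} (hpm : 0 < pm)
    (hp : ∀ j, pm ≤ p j ∧ p j ≤ 1) (a : ι → ℝ) (e : ℝ) (i : ι) :
    ∑ η, bernoulliWeight p η *
        (maskedInv p η i * (∑ j ∈ univ.erase i, (maskedInv p η j - 1) * a j - e)) ^ 2
      ≤ (1 - pm) / pm ^ 3 * ∑ j, a j ^ 2 + e ^ 2 / pm := by
  set T : (ι → Bool) → ℝ := fun η => ∑ j ∈ univ.erase i, (maskedInv p η j - 1) * a j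
  have hcross : ∑ η, bernoulliWeight p η * (maskedInv p η i ^ 2 * T η) = 0 :=
    sum_bernoulliWeight_mul_maskedInv_sq_mul_sum (fun j => (hpm.trans_le (hp j).1).ne') a i
  have hnoise : e ^ 2 * ∑ η, bernoulliWeight p η * maskedInv p η i ^ 2 ≤ e ^ 2 / pm := by
    rw [sum_bernoulliWeight_mul_maskedInv_sq, ← div_eq_mul_inv]
    exact div_le_div_of_nonneg_left (sq_nonneg e) hpm (hp i).1
  calc _ = (∑ η, bernoulliWeight p η * (maskedInv p η i ^ 2 * T η ^ 2))
        - 2 * e * (∑ η, bernoulliWeight p η * (maskedInv p η i ^ 2 * T η))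
        + e ^ 2 * ∑ η, bernoulliWeight p η * maskedInv p η i ^ 2 := by
        simp only [mul_sum, ← sum_sub_distrib, ← sum_add_distrib]
        exact sum_congr rfl fun η _ => by ring
    _ ≤ _ := by
        rw [hcross]
        linarith [sum_bernoulliWeight_mul_maskedInv_sq_mul_sum_sq_le hpm hp a i]

end Bernoulli

section DebiasedGradient

variable {ι : Type*} [Fintype ι] [DecidableEq ι]

noncomputable def debiasedGradient (p β x : ι → ℝ) (η : ι → Bool) (y : ℝ) : ι → ℝ :=
  ((∑ j, (x j * (if η j then 1 else 0)) * ((p j)⁻¹ * β j)) - y) •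
      (Matrix.diagonal fun j => (p j)⁻¹).mulVec (fun j => x j * (if η j then 1 else 0)) -
    ((1 - Matrix.diagonal p) * (Matrix.diagonal fun j => (p j)⁻¹) *
        (Matrix.diagonal fun j => (p j)⁻¹) *
        (Matrix.diagonal fun j => (x j * (if η j then 1 else 0)) ^ 2)).mulVec β

theorem debiasedGradient_apply (p β x : ι → ℝ) (η : ι → Bool) (e : ℝ) (i : ι) :
    debiasedGradient p β x η (∑ j, x j * β j + e) i
      = maskedInv p η i * x i * (∑ j ∈ univ.erase i, (maskedInv p η j - 1) * (x j * β j) - e) := by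
  have hres : ∑ j, (x j * (if η j then 1 else 0)) * ((p j)⁻¹ * β j) - (∑ j, x j * β j + e)
      = (maskedInv p η i - 1) * (x i * β i)
        + (∑ j ∈ univ.erase i, (maskedInv p η j - 1) * (x j * β j) - e) := by
    rw [← sub_sub, ← sum_sub_distrib, ← add_sub_assoc,
      add_sum_erase univ (fun j => (maskedInv p η j - 1) * (x j * β j)) (mem_univ i)]
    congr 1
    exact sum_congr rfl fun j _ => by unfold maskedInv; split_ifs <;> ring
  simp only [debiasedGradient, Pi.sub_apply, Pi.smul_apply, smul_eq_mul, hres,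
    ← Matrix.diagonal_one, Matrix.diagonal_sub, Matrix.diagonal_mul_diagonal,
    Matrix.mulVec_diagonal]
  unfold maskedInv
  split_ifs
  · by_cases hp : p i = 0
    · simp [hp]
    · field_simp
      ring
  · simp

@[fun_prop]
theorem Continuous.debiasedGradient {α : Type*} [TopologicalSpace α] {f : α → ι → ℝ} {g : α → ℝ}
    (hf : Continuous f) (hg : Continuous g) (p β : ι → ℝ) (η : ι → Bool) :
    Continuous fun a => _root_.debiasedGradient p β (f a) η (g a) := by
  unfold _root_.debiasedGradient
  fun_prop

theorem sum_bernoulliWeight_mul_sum_debiasedGradient_sq_le {p : ι → ℝ} {pm : ℝ} (hpm : 0 < pm)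
    (hp : ∀ j, pm ≤ p j ∧ p j ≤ 1) (β x : ι → ℝ) (e : ℝ) :
    ∑ η, bernoulliWeight p η * ∑ i, debiasedGradient p β x η (∑ j, x j * β j + e) i ^ 2
      ≤ (1 - pm) / pm ^ 3 * ((∑ i, x i ^ 2) * ∑ j, x j ^ 2 * β j ^ 2)
        + 1 / pm * (e ^ 2 * ∑ i, x i ^ 2) := by
  calc ∑ η, bernoulliWeight p η * ∑ i, debiasedGradient p β x η (∑ j, x j * β j + e) i ^ 2
      = ∑ i, x i ^ 2 * ∑ η, bernoulliWeight p η * (maskedInv p η i *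
        (∑ j ∈ univ.erase i, (maskedInv p η j - 1) * (x j * β j) - e)) ^ 2 := by
        simp_rw [debiasedGradient_apply, mul_sum]
        rw [sum_comm]
        exact sum_congr rfl fun i _ => sum_congr rfl fun η _ => by ring
    _ ≤ ∑ i, x i ^ 2 * ((1 - pm) / pm ^ 3 * ∑ j, (x j * β j) ^ 2 + e ^ 2 / pm) := by
        gcongr with i
        exact sum_bernoulliWeight_mul_maskedInv_mul_sub_sq_le hpm hp _ e i
    _ = (∑ i, x i ^ 2) * ((1 - pm) / pm ^ 3 * ∑ j, (x j * β j) ^ 2 + e ^ 2 / pm) :=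
        (sum_mul _ _ _).symm
    _ = _ := by
        simp only [mul_pow]
        ring

end DebiasedGradient

instance : ENNReal.HolderTriple 4 4 2 where
  inv_add_inv_eq_inv := by
    have : (4 : ENNReal) = 2 * 2 := by norm_num
    rw [this, ENNReal.mul_inv (by simp) (by simp), ← two_mul, ← mul_assoc,
      ENNReal.mul_inv_cancel (by simp) (by simp), one_mul]

theorem integral_comp_eq_integral_sum_of_indepFun {Ω α ι : Type*} [MeasurableSpace Ω]
    {μ : Measure Ω} [IsFiniteMeasure μ] [MeasurableSpace α] [Fintype ι] [MeasurableSpace ι]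
    [MeasurableSingletonClass ι] {Z : Ω → α} {δ : Ω → ι} (hδ : Measurable δ)
    (hZδ : IndepFun Z δ μ) {F : ι → α → ℝ} (hF : ∀ η, Measurable (F η))
    (hFZ : ∀ η, Integrable (fun ω => F η (Z ω)) μ) :
    ∫ ω, F (δ ω) (Z ω) ∂μ = ∫ ω, ∑ η, μ.real (δ ⁻¹' {η}) * F η (Z ω) ∂μ := by
  have hslice : ∀ η, ∫ ω, (δ ⁻¹' {η}).indicator (fun ω => F η (Z ω)) ω ∂μ
      = μ.real (δ ⁻¹' {η}) * ∫ ω, F η (Z ω) ∂μ := by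
    intro η
    have hη : Measurable (({η} : Set ι).indicator (1 : ι → ℝ)) :=
      measurable_one.indicator (measurableSet_singleton η)
    have hind : (δ ⁻¹' {η}).indicator (fun ω => F η (Z ω)) =
        fun ω => F η (Z ω) * ({η} : Set ι).indicator (1 : ι → ℝ) (δ ω) := by
      ext ω
      by_cases h : δ ω = η <;> simp [h]
    have hprob : ∫ ω, ({η} : Set ι).indicator (1 : ι → ℝ) (δ ω) ∂μ = μ.real (δ ⁻¹' {η}) := by
      rw [← integral_indicator_one (hδ (measurableSet_singleton η))]
      rfl
    have hmul := (hZδ.comp (hF η) hη).integral_fun_mul_eq_mul_integral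
      (hFZ η).aestronglyMeasurable (hη.comp hδ).aestronglyMeasurable
    simp only [Function.comp_def] at hmul
    rw [hind, hmul, hprob, mul_comm]
  have hdecomp : ∀ ω, F (δ ω) (Z ω) = ∑ η, (δ ⁻¹' {η}).indicator (fun ω => F η (Z ω)) ω := by
    classical
    intro ω
    simp only [Set.indicator_apply, Set.mem_preimage, Set.mem_singleton_iff]
    rw [sum_ite_eq, if_pos (mem_univ _)]
  rw [integral_congr_ae (ae_of_all _ hdecomp),
    integral_finsetSum _ fun η _ => (hFZ η).indicator (hδ (measurableSet_singleton η)),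
    integral_finsetSum _ fun η _ => (hFZ η).const_mul _]
  simp only [hslice, integral_const_mul]

theorem memLp_four_apply_of_integrable_norm_pow {Ω ι : Type*} [MeasurableSpace Ω] {μ : Measure Ω}
    [Fintype ι] {X : Ω → EuclideanSpace ℝ ι} (hX : AEStronglyMeasurable X μ)
    (hX4 : Integrable (fun ω => ‖X ω‖ ^ 4) μ) (j : ι) : MemLp (fun ω => X ω j) 4 μ :=
  ((integrable_norm_rpow_iff hX (by norm_num) (by norm_num)).1 (by simpa using hX4)).eval_piLp j

section Moments

variable {Ω ι : Type*} [MeasurableSpace Ω] {μ : Measure Ω} {X : Ω → ι → ℝ} {ε : Ω → ℝ}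

theorem memLp_two_apply_mul_apply (hX : ∀ i, MemLp (fun ω => X ω i) 4 μ) (i j : ι) :
    MemLp (fun ω => X ω i * X ω j) 2 μ :=
  (hX j).mul' (hX i)

theorem memLp_two_mul_apply_of_indepFun [IsFiniteMeasure μ]
    (hX : ∀ i, MemLp (fun ω => X ω i) 4 μ) (hε : MemLp ε 2 μ) (hXε : IndepFun X ε μ) (i : ι) :
    MemLp (fun ω => ε ω * X ω i) 2 μ := by
  have hXi : Integrable (fun ω => X ω i ^ 2) μ :=
    ((hX i).mono_exponent (by norm_num)).integrable_sq
  have hind : IndepFun (fun ω => X ω i ^ 2) (fun ω => ε ω ^ 2) μ :=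
    hXε.comp ((measurable_pi_apply i).pow_const 2) (measurable_id.pow_const 2)
  rw [memLp_two_iff_integrable_sq (f := fun ω => ε ω * X ω i) (hε.1.mul (hX i).1)]
  simp_rw [mul_pow, mul_comm (ε _ ^ 2)]
  exact hind.integrable_mul hXi hε.integrable_sq

variable [Fintype ι]

theorem integrable_sq_mul_sum_sq (hεX : ∀ i, MemLp (fun ω => ε ω * X ω i) 2 μ) :
    Integrable (fun ω => ε ω ^ 2 * ∑ i, X ω i ^ 2) μ := by
  simp_rw [mul_sum, ← mul_pow]
  exact integrable_finsetSum _ fun i _ => (hεX i).integrable_sq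

theorem integrable_sum_sq_mul_sum_sq (hX : ∀ i, MemLp (fun ω => X ω i) 4 μ) (β : ι → ℝ) :
    Integrable (fun ω => (∑ i, X ω i ^ 2) * ∑ j, X ω j ^ 2 * β j ^ 2) μ := by
  simp_rw [sum_mul_sum]
  refine integrable_finsetSum _ fun i _ => integrable_finsetSum _ fun j _ => ?_
  exact ((memLp_two_apply_mul_apply hX i j).integrable_sq.mul_const (β j ^ 2)).congr
    (ae_of_all _ fun ω => by ring)

variable [DecidableEq ι]

theorem integrable_sum_debiasedGradient_sq (hX : ∀ i, MemLp (fun ω => X ω i) 4 μ)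
    (hεX : ∀ i, MemLp (fun ω => ε ω * X ω i) 2 μ) (p β : ι → ℝ) (η : ι → Bool) :
    Integrable (fun ω => ∑ i, debiasedGradient p β (X ω) η (∑ j, X ω j * β j + ε ω) i ^ 2) μ := by
  simp_rw [debiasedGradient_apply]
  refine integrable_finsetSum _ fun i _ => MemLp.integrable_sq ?_
  have hexpand : (fun ω => maskedInv p η i * X ω i *
      (∑ j ∈ univ.erase i, (maskedInv p η j - 1) * (X ω j * β j) - ε ω))
      = fun ω => ∑ j ∈ univ.erase i, maskedInv p η i * (maskedInv p η j - 1) * β j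
          * (X ω i * X ω j) - maskedInv p η i * (ε ω * X ω i) := by
    funext ω
    rw [mul_sub, mul_sum]
    congr 1
    · exact sum_congr rfl fun j _ => by ring
    · ring
  rw [hexpand]
  exact (memLp_finsetSum _ fun j _ => (memLp_two_apply_mul_apply hX i j).const_mul _).sub
    ((hεX i).const_mul _)

theorem integral_sum_debiasedGradient_sq_le [IsProbabilityMeasure μ] {δ : Ω → ι → Bool}
    (hX : ∀ i, MemLp (fun ω => X ω i) 4 μ) (hεX : ∀ i, MemLp (fun ω => ε ω * X ω i) 2 μ)
    (hδ : Measurable δ) (hXεδ : IndepFun (fun ω => (X ω, ε ω)) δ μ) {p : ι → ℝ}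
    (hδlaw : ∀ η, μ.real (δ ⁻¹' {η}) = bernoulliWeight p η) {pm : ℝ} (hpm : 0 < pm)
    (hp : ∀ j, pm ≤ p j ∧ p j ≤ 1) (β : ι → ℝ) :
    ∫ ω, ∑ i, debiasedGradient p β (X ω) (δ ω) (∑ j, X ω j * β j + ε ω) i ^ 2 ∂μ
      ≤ (1 - pm) / pm ^ 3 * ∫ ω, (∑ i, X ω i ^ 2) * ∑ j, X ω j ^ 2 * β j ^ 2 ∂μ
        + 1 / pm * ∫ ω, ε ω ^ 2 * ∑ i, X ω i ^ 2 ∂μ := by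
  have hsignal := integrable_sum_sq_mul_sum_sq hX β
  have hnoise := integrable_sq_mul_sum_sq hεX
  calc _ = ∫ ω, ∑ η, bernoulliWeight p η *
          ∑ i, debiasedGradient p β (X ω) η (∑ j, X ω j * β j + ε ω) i ^ 2 ∂μ := by
        simp_rw [← hδlaw]
        exact integral_comp_eq_integral_sum_of_indepFun (F := fun η z =>
          ∑ i, debiasedGradient p β z.1 η (∑ j, z.1 j * β j + z.2) i ^ 2) hδ hXεδ
          (fun η => by fun_prop) fun η => integrable_sum_debiasedGradient_sq hX hεX p β η
    _ ≤ ∫ ω, (1 - pm) / pm ^ 3 * ((∑ i, X ω i ^ 2) * ∑ j, X ω j ^ 2 * β j ^ 2)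
          + 1 / pm * (ε ω ^ 2 * ∑ i, X ω i ^ 2) ∂μ :=
        integral_mono (integrable_finsetSum _ fun η _ =>
          (integrable_sum_debiasedGradient_sq hX hεX p β η).const_mul _)
          ((hsignal.const_mul _).add (hnoise.const_mul _))
          fun ω => sum_bernoulliWeight_mul_sum_debiasedGradient_sq_le hpm hp β (X ω) (ε ω)
    _ = _ := by
        rw [integral_add (hsignal.const_mul _) (hnoise.const_mul _), integral_const_mul,
          integral_const_mul]

end Moments

theorem stmt_5_general (d : ℕ) (hd : 1 ≤ d)
    {Ω : Type*} [MeasurableSpace Ω] (μ : Measure Ω) [IsProbabilityMeasure μ]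
    (X : Ω → EuclideanSpace ℝ (Fin d)) (ε : Ω → ℝ) (δ : Ω → Fin d → Bool)
    (hXm : ∀ j, Measurable fun ω => X ω j) (hεm : Measurable ε) (hδm : Measurable δ)
    (hεX : IndepFun X ε μ)
    (hε2 : Integrable (fun ω => (ε ω) ^ 2) μ)
    (p : Fin d → ℝ) (hp : ∀ j, 0 < p j ∧ p j ≤ 1)
    (hδlaw : ∀ η : Fin d → Bool,
      μ {ω | δ ω = η} = ENNReal.ofReal (∏ j, if η j then p j else 1 - p j))
    (hδindep : IndepFun (fun ω => (X ω, ε ω)) δ μ)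
    (hX4 : Integrable (fun ω => ‖X ω‖ ^ 4) μ)
    (βs : EuclideanSpace ℝ (Fin d))
    (y : Ω → ℝ) (hy : ∀ ω, y ω = (∑ j, X ω j * βs j) + ε ω)
    (pm : ℝ) (hpm : pm = Finset.univ.inf' ⟨⟨0, hd⟩, Finset.mem_univ _⟩ p)
    (g : Ω → Fin d → ℝ)
    (hg : ∀ ω, g ω =
      ((∑ j, (X ω j * (if δ ω j then 1 else 0)) * ((p j)⁻¹ * βs j)) - y ω) •
          (Matrix.diagonal fun j => (p j)⁻¹).mulVec (fun j => X ω j * (if δ ω j then 1 else 0)) -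
        ((1 - Matrix.diagonal p) * (Matrix.diagonal fun j => (p j)⁻¹) *
            (Matrix.diagonal fun j => (p j)⁻¹) *
            (Matrix.diagonal fun j => (X ω j * (if δ ω j then 1 else 0)) ^ 2)).mulVec
          (fun j => βs j)) :
    ∫ ω, ∑ i, (g ω i) ^ 2 ∂μ ≤
      (1 / pm ^ 2) * ∫ ω, (ε ω) ^ 2 * ‖X ω‖ ^ 2 ∂μ +
        (((1 - pm) + (1 - pm) ^ 2) / pm ^ 3) *
          ∫ ω, ‖X ω‖ ^ 2 * ∑ j, (X ω j) ^ 2 * (βs j) ^ 2 ∂μ := by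
  have hpm_le : ∀ j, pm ≤ p j := fun j => hpm ▸ inf'_le _ (mem_univ j)
  have hpm_pos : 0 < pm := hpm ▸ (lt_inf'_iff _).2 fun j _ => (hp j).1
  have hpm_one : pm ≤ 1 := (hpm_le ⟨0, hd⟩).trans (hp _).2
  have hXcoord : ∀ j, MemLp (fun ω => X ω j) 4 μ := memLp_four_apply_of_integrable_norm_pow
    ((WithLp.measurable_toLp 2 _).comp (measurable_pi_iff.mpr hXm)).aestronglyMeasurable hX4
  have hεXcoord : ∀ j, MemLp (fun ω => ε ω * X ω j) 2 μ := memLp_two_mul_apply_of_indepFun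
    hXcoord ((memLp_two_iff_integrable_sq hεm.aestronglyMeasurable).2 hε2)
    (hεX.comp (WithLp.measurable_ofLp 2 _) measurable_id)
  have hlaw : ∀ η, μ.real (δ ⁻¹' {η}) = bernoulliWeight p η := fun η => by
    rw [measureReal_def, show δ ⁻¹' {η} = {ω | δ ω = η} from rfl, hδlaw η]
    exact ENNReal.toReal_ofReal (bernoulliWeight_nonneg (fun j => ⟨(hp j).1.le, (hp j).2⟩) η)
  have hgrad : ∀ ω, ∑ i, g ω i ^ 2 = ∑ i, debiasedGradient p (fun j => βs j) (fun j => X ω j)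
      (δ ω) (∑ j, X ω j * βs j + ε ω) i ^ 2 := fun ω => by
    rw [hg ω, hy ω]
    rfl
  simp_rw [hgrad, EuclideanSpace.real_norm_sq_eq]
  refine (integral_sum_debiasedGradient_sq_le (X := fun ω j => X ω j) hXcoord hεXcoord hδm
    (hδindep.comp ((WithLp.measurable_ofLp 2 _).prodMap measurable_id) measurable_id) hlaw
    hpm_pos (fun j => ⟨hpm_le j, (hp j).2⟩) fun j => βs j).trans ?_
  rw [add_comm]
  gcongr ?_ * ?_ + ?_ * ?_
  · exact one_div_le_one_div_of_le (by positivity) (by nlinarith)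
  · exact div_le_div_of_nonneg_right (by nlinarith) (by positivity)

/-- Let `(X, ε, δ)` be random with `ε ⟂ X`, `E[ε] = 0`, `E[ε²] < ∞`,
`δ` an independent-coordinates Bernoulli mask (parameters `p_j ∈ (0,1]`) independent of
`(X, ε)`, and `E[‖X‖⁴] < ∞`.  With `y = Xᵀβ* + ε`, `P = diag(p)`, `p_m = min_j p_j`,
`X̃ = X ⊙ δ` and `g̃(β*) = P⁻¹ X̃ (X̃ᵀ P⁻¹ β* − y) − (I − P) P⁻² diag(X̃ X̃ᵀ) β*`:
`E[‖g̃(β*)‖²] ≤ (1/p_m²) E[ε² ‖X‖²]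
  + (((1 − p_m) + (1 − p_m)²)/p_m³) E[‖X‖² Σ_j X_j² β*_j²]`. -/
theorem stmt_5 (d : ℕ) (hd : 1 ≤ d)
    {Ω : Type*} [MeasurableSpace Ω] (μ : Measure Ω) [IsProbabilityMeasure μ]
    (X : Ω → EuclideanSpace ℝ (Fin d)) (ε : Ω → ℝ) (δ : Ω → Fin d → Bool)
    (hXm : ∀ j, Measurable fun ω => X ω j) (hεm : Measurable ε) (hδm : Measurable δ)
    (hεX : IndepFun X ε μ)
    (hε0 : ∫ ω, ε ω ∂μ = 0)
    (hε2 : Integrable (fun ω => (ε ω) ^ 2) μ)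
    (p : Fin d → ℝ) (hp : ∀ j, 0 < p j ∧ p j ≤ 1)
    (hδlaw : ∀ η : Fin d → Bool,
      μ {ω | δ ω = η} = ENNReal.ofReal (∏ j, if η j then p j else 1 - p j))
    (hδindep : IndepFun (fun ω => (X ω, ε ω)) δ μ)
    (hX4 : Integrable (fun ω => ‖X ω‖ ^ 4) μ)
    (βs : EuclideanSpace ℝ (Fin d))
    (y : Ω → ℝ) (hy : ∀ ω, y ω = (∑ j, X ω j * βs j) + ε ω)
    (pm : ℝ) (hpm : pm = Finset.univ.inf' ⟨⟨0, hd⟩, Finset.mem_univ _⟩ p)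
    (g : Ω → Fin d → ℝ)
    (hg : ∀ ω, g ω =
      ((∑ j, (X ω j * (if δ ω j then 1 else 0)) * ((p j)⁻¹ * βs j)) - y ω) •
          (Matrix.diagonal fun j => (p j)⁻¹).mulVec (fun j => X ω j * (if δ ω j then 1 else 0)) -
        ((1 - Matrix.diagonal p) * (Matrix.diagonal fun j => (p j)⁻¹) *
            (Matrix.diagonal fun j => (p j)⁻¹) *
            (Matrix.diagonal fun j => (X ω j * (if δ ω j then 1 else 0)) ^ 2)).mulVec
          (fun j => βs j)) :
    ∫ ω, ∑ i, (g ω i) ^ 2 ∂μ ≤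
      (1 / pm ^ 2) * ∫ ω, (ε ω) ^ 2 * ‖X ω‖ ^ 2 ∂μ +
        (((1 - pm) + (1 - pm) ^ 2) / pm ^ 3) *
          ∫ ω, ‖X ω‖ ^ 2 * ∑ j, (X ω j) ^ 2 * (βs j) ^ 2 ∂μ :=
  stmt_5_general d hd μ X ε δ hXm hεm hδm hεX hε2 p hp hδlaw hδindep hX4 βs y hy pm hpm g hg
end
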